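/- arXiv:2402.00307 — 3 statements merged into one kernel-verified Lean document; each statement's English description precedes it below -/
import Mathlib

section
/- Let γ̂ ~ N(γ, Σ_X) and Γ̂ ~ N(γᵀβ₀, σ_Y²) be independent, with β₀ ∈ ℝ^K fixed, and set M = γγᵀ σ_Y⁻², V = Σ_X σ_Y⁻². Then the covariance of σ_Y⁻²(γ̂ Γ̂ − γ̂ γ̂ᵀ β₀) equals (1 + β₀ᵀ V β₀)(M + V) + V β₀ β₀ᵀ V. -/
open MeasureTheory

open MeasureTheory Real ProbabilityTheory
open scoped NNReal

namespace Stmt8Aux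

lemma pdf_eq (v : ℝ≥0) (x : ℝ) :
    gaussianPDFReal 0 v x = (√(2 * π * v))⁻¹ * rexp (-(2 * (v:ℝ))⁻¹ * x ^ 2) := by
  rw [gaussianPDFReal]
  rcases eq_or_ne v 0 with h | h
  · subst h; simp
  · congr 1
    rw [sub_zero]
    congr 1
    have hv : (0:ℝ) < v := by positivity
    field_simp

lemma integrable_pow_mul_pdf (v : ℝ≥0) (hv : v ≠ 0) (n : ℕ) :
    Integrable (fun x : ℝ => x ^ n * gaussianPDFReal 0 v x) := by
  have hv0 : (0:ℝ) < v := by positivity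
  have hb : (0:ℝ) < (2 * (v:ℝ))⁻¹ := by positivity
  have h : (fun x : ℝ => x ^ n * gaussianPDFReal 0 v x)
      = fun x => (√(2 * π * v))⁻¹ * (x ^ (n:ℝ) * rexp (-(2 * (v:ℝ))⁻¹ * x ^ 2)) := by
    ext x
    rw [pdf_eq, rpow_natCast]
    ring
  rw [h]
  exact (integrable_rpow_mul_exp_neg_mul_sq hb
    (by exact lt_of_lt_of_le neg_one_lt_zero (Nat.cast_nonneg n))).const_mul _

lemma pdf_even (v : ℝ≥0) (x : ℝ) : gaussianPDFReal 0 v (-x) = gaussianPDFReal 0 v x := by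
  simp [pdf_eq]

lemma J_odd (v : ℝ≥0) (n : ℕ) (hn : Odd n) :
    ∫ x : ℝ, x ^ n * gaussianPDFReal 0 v x = 0 := by
  have h1 := integral_neg_eq_self (fun x : ℝ => x ^ n * gaussianPDFReal 0 v x) volume
  have h2 : (fun x : ℝ => (fun x : ℝ => x ^ n * gaussianPDFReal 0 v x) (-x))
      = fun x : ℝ => -(x ^ n * gaussianPDFReal 0 v x) := by
    ext x
    simp only [pdf_even, hn.neg_pow]
    ring
  rw [h2, integral_neg] at h1
  linarith

lemma gamma32 : Real.Gamma (3/2) = (1/2) * √π := by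
  have h : (3:ℝ)/2 = 1/2 + 1 := by norm_num
  rw [h, Real.Gamma_add_one (by norm_num), Real.Gamma_one_half_eq]

lemma gamma52 : Real.Gamma (5/2) = (3/4) * √π := by
  have h : (5:ℝ)/2 = 3/2 + 1 := by norm_num
  rw [h, Real.Gamma_add_one (by norm_num), gamma32]
  ring

lemma J_even (v : ℝ≥0) (hv : v ≠ 0) (q : ℕ) (hq : Even q) :
    ∫ x : ℝ, x ^ q * gaussianPDFReal 0 v x
      = (√(2 * (v:ℝ)) * √π)⁻¹ * (2 * ((2*(v:ℝ)) ^ (((q:ℝ)+1)/2) * (1/2)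
          * Real.Gamma (((q:ℝ)+1)/2))) := by
  have hv0 : (0:ℝ) < v := by positivity
  have hb : (0:ℝ) < (2 * (v:ℝ))⁻¹ := by positivity
  have h1 : (fun x : ℝ => x ^ q * gaussianPDFReal 0 v x)
      = fun x : ℝ => (fun y : ℝ => y ^ q * gaussianPDFReal 0 v y) |x| := by
    ext x
    simp only [pdf_eq, sq_abs, hq.pow_abs]
  calc ∫ x : ℝ, x ^ q * gaussianPDFReal 0 v x
      = ∫ x : ℝ, (fun y : ℝ => y ^ q * gaussianPDFReal 0 v y) |x| := by rw [← h1]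
    _ = 2 * ∫ y in Set.Ioi (0:ℝ), y ^ q * gaussianPDFReal 0 v y :=
        integral_comp_abs (f := fun y : ℝ => y ^ q * gaussianPDFReal 0 v y)
    _ = 2 * ∫ y in Set.Ioi (0:ℝ), (√(2 * π * v))⁻¹ *
          (y ^ (q:ℝ) * rexp (-(2 * (v:ℝ))⁻¹ * y ^ (2:ℝ))) := by
        congr 1
        refine setIntegral_congr_fun measurableSet_Ioi (fun y hy => ?_)
        rw [pdf_eq, rpow_natCast, Real.rpow_two]
        ring
    _ = 2 * ((√(2 * π * v))⁻¹ *
          ∫ y in Set.Ioi (0:ℝ), y ^ (q:ℝ) * rexp (-(2 * (v:ℝ))⁻¹ * y ^ (2:ℝ))) := by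
        rw [integral_const_mul]
    _ = _ := by
        rw [integral_rpow_mul_exp_neg_mul_rpow two_pos
          (by exact lt_of_lt_of_le neg_one_lt_zero (Nat.cast_nonneg q)) hb,
          Real.inv_rpow (by positivity), ← Real.rpow_neg (by positivity)]
        rw [show (-(((q:ℝ))+1)/2 : ℝ) = -((((q:ℝ))+1)/2) by ring, neg_neg]
        rw [show (2 * π * (v:ℝ)) = (2*(v:ℝ)) * π by ring, Real.sqrt_mul (by positivity)]
        ring

lemma J2 (v : ℝ≥0) (hv : v ≠ 0) : ∫ x : ℝ, x ^ 2 * gaussianPDFReal 0 v x = v := by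
  rw [J_even v hv 2 (by norm_num)]
  have hv0 : (0:ℝ) < v := by positivity
  have h32 : (((2:ℕ):ℝ)+1)/2 = 3/2 := by norm_num
  rw [h32, gamma32]
  have hsplit : (2*(v:ℝ)) ^ ((3:ℝ)/2) = (2*(v:ℝ)) * √(2*(v:ℝ)) := by
    rw [show (3:ℝ)/2 = 1 + 1/2 by norm_num, Real.rpow_add (by positivity), Real.rpow_one,
      ← Real.sqrt_eq_rpow]
  rw [hsplit]
  have hs : (0:ℝ) < √(2*(v:ℝ)) := Real.sqrt_pos.mpr (by positivity)
  have hp : (0:ℝ) < √π := Real.sqrt_pos.mpr pi_pos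
  field_simp

lemma J4 (v : ℝ≥0) (hv : v ≠ 0) : ∫ x : ℝ, x ^ 4 * gaussianPDFReal 0 v x = 3 * (v:ℝ)^2 := by
  rw [J_even v hv 4 (by decide)]
  have hv0 : (0:ℝ) < v := by positivity
  have h52 : (((4:ℕ):ℝ)+1)/2 = 5/2 := by norm_num
  rw [h52, gamma52]
  have hsplit : (2*(v:ℝ)) ^ ((5:ℝ)/2) = (2*(v:ℝ))^2 * √(2*(v:ℝ)) := by
    rw [show (5:ℝ)/2 = 2 + 1/2 by norm_num, Real.rpow_add (by positivity),
      ← Real.sqrt_eq_rpow, Real.rpow_two]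
  rw [hsplit]
  have hs : (0:ℝ) < √(2*(v:ℝ)) := Real.sqrt_pos.mpr (by positivity)
  have hp : (0:ℝ) < √π := Real.sqrt_pos.mpr pi_pos
  field_simp
  ring



lemma shifted_eq (m : ℝ) (v : ℝ≥0) (n : ℕ) :
    (fun y : ℝ => (y + m) ^ n * gaussianPDFReal 0 v y)
      = fun y => ∑ j ∈ Finset.range (n+1),
          (m ^ (n-j) * (n.choose j : ℝ)) * (y ^ j * gaussianPDFReal 0 v y) := by
  ext y
  rw [add_pow, Finset.sum_mul]
  congr 1 with j
  ring

lemma integrable_shifted (m : ℝ) (v : ℝ≥0) (hv : v ≠ 0) (n : ℕ) :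
    Integrable (fun y : ℝ => (y + m) ^ n * gaussianPDFReal 0 v y) := by
  rw [shifted_eq]
  exact integrable_finset_sum _ (fun j _ => ((integrable_pow_mul_pdf v hv j).const_mul _))

lemma integrable_pow_mul_pdf' (m : ℝ) (v : ℝ≥0) (hv : v ≠ 0) (n : ℕ) :
    Integrable (fun x : ℝ => x ^ n * gaussianPDFReal m v x) := by
  have h := (integrable_shifted m v hv n).comp_sub_right m
  refine h.congr (Filter.Eventually.of_forall fun x => ?_)
  simp only [sub_add_cancel, gaussianPDFReal_sub, zero_add]

lemma integral_pow_gaussianReal (m : ℝ) {v : ℝ≥0} (hv : v ≠ 0) (n : ℕ) :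
    ∫ x, x ^ n ∂(gaussianReal m v) = ∫ y : ℝ, (y + m) ^ n * gaussianPDFReal 0 v y := by
  rw [gaussianReal_of_var_ne_zero _ hv, gaussianPDF_def]
  have hmeas : Measurable (fun x : ℝ => (gaussianPDFReal m v x).toNNReal) :=
    (measurable_gaussianPDFReal m v).real_toNNReal
  have h1 : ∫ x, x ^ n ∂(volume.withDensity fun x => ENNReal.ofReal (gaussianPDFReal m v x))
      = ∫ x : ℝ, (gaussianPDFReal m v x).toNNReal • x ^ n := by
    exact integral_withDensity_eq_integral_smul hmeas _
  rw [h1]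
  have h2 : (fun x : ℝ => (gaussianPDFReal m v x).toNNReal • x ^ n)
      = fun x : ℝ => x ^ n * gaussianPDFReal m v x := by
    ext x
    rw [NNReal.smul_def, smul_eq_mul, Real.coe_toNNReal _ (gaussianPDFReal_nonneg m v x)]
    ring
  rw [h2, ← integral_add_right_eq_self (fun x : ℝ => x ^ n * gaussianPDFReal m v x) m]
  congr 1 with y
  rw [gaussianPDFReal_add]
  simp

lemma integrable_pow_gaussianReal (m : ℝ) (v : ℝ≥0) (n : ℕ) :
    Integrable (fun x : ℝ => x ^ n) (gaussianReal m v) := by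
  rcases eq_or_ne v 0 with h | h
  · subst h
    rw [gaussianReal_zero_var]
    refine ⟨(measurable_id'.pow_const n).aestronglyMeasurable, ?_⟩
    rw [HasFiniteIntegral, lintegral_dirac]
    exact ENNReal.coe_lt_top
  · rw [gaussianReal_of_var_ne_zero _ h, gaussianPDF_def]
    rw [integrable_withDensity_iff ((measurable_gaussianPDFReal m v).ennreal_ofReal)
      (Filter.Eventually.of_forall fun x => ENNReal.ofReal_lt_top)]
    refine (integrable_pow_mul_pdf' m v h n).congr (Filter.Eventually.of_forall fun x => ?_)
    show x ^ n * gaussianPDFReal m v x = x ^ n * (ENNReal.ofReal (gaussianPDFReal m v x)).toReal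
    rw [ENNReal.toReal_ofReal (gaussianPDFReal_nonneg m v x)]



lemma J0 (v : ℝ≥0) (hv : v ≠ 0) : ∫ x : ℝ, x ^ 0 * gaussianPDFReal 0 v x = 1 := by
  simp only [pow_zero, one_mul]
  exact integral_gaussianPDFReal_eq_one 0 hv

lemma mom_pow (m : ℝ) {v : ℝ≥0} (hv : v ≠ 0) (n : ℕ) :
    ∫ x, x ^ n ∂(gaussianReal m v)
      = ∑ j ∈ Finset.range (n+1), (m ^ (n-j) * (n.choose j : ℝ)) *
          ∫ y : ℝ, y ^ j * gaussianPDFReal 0 v y := by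
  rw [integral_pow_gaussianReal m hv, shifted_eq]
  rw [integral_finset_sum _ (fun j _ => (integrable_pow_mul_pdf v hv j).const_mul _)]
  exact Finset.sum_congr rfl (fun j _ => integral_const_mul _ _)

lemma mom1 (m : ℝ) (v : ℝ≥0) : ∫ x, x ∂(gaussianReal m v) = m := by
  rcases eq_or_ne v 0 with h | h
  · subst h; rw [gaussianReal_zero_var]; exact integral_dirac _ m
  · have h1 : ∫ x, x ∂(gaussianReal m v) = ∫ x, x ^ 1 ∂(gaussianReal m v) := by simp
    rw [h1, mom_pow m h 1]
    have j0 : ∫ y : ℝ, gaussianPDFReal 0 v y = 1 := integral_gaussianPDFReal_eq_one 0 h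
    have j1 : ∫ y : ℝ, y * gaussianPDFReal 0 v y = 0 := by
      have := J_odd v 1 (by decide); simpa using this
    simp [Finset.sum_range_succ, j1]
    rw [j0]; ring

lemma mom2 (m : ℝ) (v : ℝ≥0) : ∫ x, x ^ 2 ∂(gaussianReal m v) = m ^ 2 + v := by
  rcases eq_or_ne v 0 with h | h
  · subst h; rw [gaussianReal_zero_var, integral_dirac _ m]; simp
  · rw [mom_pow m h 2]
    have j0 : ∫ y : ℝ, gaussianPDFReal 0 v y = 1 := integral_gaussianPDFReal_eq_one 0 h
    have j1 : ∫ y : ℝ, y * gaussianPDFReal 0 v y = 0 := by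
      have := J_odd v 1 (by decide); simpa using this
    simp [Finset.sum_range_succ, J2 v h]
    rw [j0, j1]; ring

lemma mom3 (m : ℝ) (v : ℝ≥0) : ∫ x, x ^ 3 ∂(gaussianReal m v) = m ^ 3 + 3 * m * v := by
  rcases eq_or_ne v 0 with h | h
  · subst h; rw [gaussianReal_zero_var, integral_dirac _ m]; simp
  · rw [mom_pow m h 3]
    have j0 : ∫ y : ℝ, gaussianPDFReal 0 v y = 1 := integral_gaussianPDFReal_eq_one 0 h
    have j1 : ∫ y : ℝ, y * gaussianPDFReal 0 v y = 0 := by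
      have := J_odd v 1 (by decide); simpa using this
    simp [Finset.sum_range_succ, J2 v h, J_odd v 3 (by decide)]
    rw [j0, j1]; ring

lemma mom4 (m : ℝ) (v : ℝ≥0) :
    ∫ x, x ^ 4 ∂(gaussianReal m v) = m ^ 4 + 6 * m ^ 2 * v + 3 * (v:ℝ) ^ 2 := by
  rcases eq_or_ne v 0 with h | h
  · subst h; rw [gaussianReal_zero_var, integral_dirac _ m]; simp
  · rw [mom_pow m h 4]
    have j0 : ∫ y : ℝ, gaussianPDFReal 0 v y = 1 := integral_gaussianPDFReal_eq_one 0 h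
    have j1 : ∫ y : ℝ, y * gaussianPDFReal 0 v y = 0 := by
      have := J_odd v 1 (by decide); simpa using this
    simp [Finset.sum_range_succ, J2 v h, J_odd v 3 (by decide), J4 v h]
    rw [j0, j1]
    show m ^ 4 * 1 + m ^ 3 * ↑(Nat.choose 4 1) * 0 + m ^ 2 * ↑(Nat.choose 4 2) * ↑v = _
    norm_num [Nat.choose]
    left; ring



variable {Ω : Type*} [MeasurableSpace Ω] {μ : Measure Ω} {X : Ω → ℝ} {m : ℝ} {v : ℝ≥0}

lemma rv_aemeasurable (hX : Measure.map X μ = gaussianReal m v) : AEMeasurable X μ :=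
  aemeasurable_of_map_neZero (by rw [hX]; infer_instance)

lemma rv_int (hX : Measure.map X μ = gaussianReal m v) (n : ℕ) :
    Integrable (fun ω => X ω ^ n) μ := by
  have h := (integrable_map_measure
    ((measurable_id'.pow_const n).aestronglyMeasurable)
    (rv_aemeasurable hX)).mp
  rw [hX] at h
  exact h (integrable_pow_gaussianReal m v n)

lemma rv_mom (hX : Measure.map X μ = gaussianReal m v) (n : ℕ) :
    ∫ ω, X ω ^ n ∂μ = ∫ x, x ^ n ∂(gaussianReal m v) := by
  rw [← hX, integral_map (rv_aemeasurable hX)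
    ((measurable_id'.pow_const n).aestronglyMeasurable)]

lemma rv_mom1 (hX : Measure.map X μ = gaussianReal m v) : ∫ ω, X ω ∂μ = m := by
  have h := rv_mom hX 1
  simpa [mom1 m v] using h

lemma rv_mom2 (hX : Measure.map X μ = gaussianReal m v) : ∫ ω, X ω ^ 2 ∂μ = m ^ 2 + v := by
  rw [rv_mom hX 2, mom2]

lemma rv_mom3 (hX : Measure.map X μ = gaussianReal m v) :
    ∫ ω, X ω ^ 3 ∂μ = m ^ 3 + 3 * m * v := by rw [rv_mom hX 3, mom3]

lemma rv_mom4 (hX : Measure.map X μ = gaussianReal m v) :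
    ∫ ω, X ω ^ 4 ∂μ = m ^ 4 + 6 * m ^ 2 * v + 3 * (v:ℝ) ^ 2 := by rw [rv_mom hX 4, mom4]


variable {K : ℕ}

/-- bilinear form -/
def bbF (S : Matrix (Fin K) (Fin K) ℝ) (c d : Fin K → ℝ) : ℝ :=
  ∑ k, ∑ l, c k * S k l * d l

def mmF (γ c : Fin K → ℝ) : ℝ := ∑ k, c k * γ k

lemma bbF_nonneg {S : Matrix (Fin K) (Fin K) ℝ} (hS : S.PosSemidef) (c : Fin K → ℝ) :
    0 ≤ bbF S c c := by
  have h := hS.dotProduct_mulVec_nonneg c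
  simpa [bbF, dotProduct, Matrix.mulVec, Finset.mul_sum, mul_assoc] using h

lemma bbF_symm {S : Matrix (Fin K) (Fin K) ℝ} (hS : S.PosSemidef) (c d : Fin K → ℝ) :
    bbF S c d = bbF S d c := by
  rw [bbF, bbF, Finset.sum_comm]
  refine Finset.sum_congr rfl fun l _ => Finset.sum_congr rfl fun k _ => ?_
  rw [show S l k = S k l from by simpa using (hS.1.apply k l)]
  ring

lemma mmF_add (γ c d : Fin K → ℝ) : mmF γ (c + d) = mmF γ c + mmF γ d := by
  simp [mmF, add_mul, Finset.sum_add_distrib]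

lemma mmF_sub (γ c d : Fin K → ℝ) : mmF γ (c - d) = mmF γ c - mmF γ d := by
  simp [mmF, sub_mul, Finset.sum_sub_distrib]

lemma bbF_add_left (S : Matrix (Fin K) (Fin K) ℝ) (c d e : Fin K → ℝ) :
    bbF S (c + d) e = bbF S c e + bbF S d e := by
  simp [bbF, add_mul, Finset.sum_add_distrib]

lemma bbF_sub_left (S : Matrix (Fin K) (Fin K) ℝ) (c d e : Fin K → ℝ) :
    bbF S (c - d) e = bbF S c e - bbF S d e := by
  simp [bbF, sub_mul, Finset.sum_sub_distrib]

lemma bbF_add_right (S : Matrix (Fin K) (Fin K) ℝ) (c d e : Fin K → ℝ) :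
    bbF S c (d + e) = bbF S c d + bbF S c e := by
  simp [bbF, mul_add, Finset.sum_add_distrib]

lemma bbF_sub_right (S : Matrix (Fin K) (Fin K) ℝ) (c d e : Fin K → ℝ) :
    bbF S c (d - e) = bbF S c d - bbF S c e := by
  simp [bbF, mul_sub, Finset.sum_sub_distrib]

lemma mmF_single (γ : Fin K → ℝ) (s : Fin K) : mmF γ (Pi.single s 1) = γ s := by
  rw [mmF, Finset.sum_eq_single s]
  · simp
  · intro k _ hk; simp [Pi.single_eq_of_ne hk]
  · simp

lemma bbF_single_right (S : Matrix (Fin K) (Fin K) ℝ) (c : Fin K → ℝ) (t : Fin K) :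
    bbF S c (Pi.single t 1) = ∑ k, c k * S k t := by
  rw [bbF]
  refine Finset.sum_congr rfl fun k _ => ?_
  rw [Finset.sum_eq_single t]
  · simp
  · intro l _ hl; simp [Pi.single_eq_of_ne hl]
  · simp

lemma bbF_single_left (S : Matrix (Fin K) (Fin K) ℝ) (s : Fin K) (d : Fin K → ℝ) :
    bbF S (Pi.single s 1) d = ∑ k, S s k * d k := by
  rw [bbF, Finset.sum_eq_single s]
  · simp
  · intro k _ hk; simp [Pi.single_eq_of_ne hk]
  · simp

set_option linter.unusedSectionVars false

section LLayer

variable {Ω : Type*} [MeasurableSpace Ω] {μ : Measure Ω}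
variable {K : ℕ} {γhat : Ω → Fin K → ℝ} {γ : Fin K → ℝ} {S : Matrix (Fin K) (Fin K) ℝ}

variable (hS : S.PosSemidef)
variable (hG : ∀ c : Fin K → ℝ,
    Measure.map (fun ω => ∑ k, c k * γhat ω k) μ =
      gaussianReal (mmF γ c) (Real.toNNReal (bbF S c c)))

/-- abbreviation for the linear combination -/
def LF (γhat : Ω → Fin K → ℝ) (c : Fin K → ℝ) (ω : Ω) : ℝ := ∑ k, c k * γhat ω k

lemma LF_add (c d : Fin K → ℝ) (ω : Ω) :
    LF γhat (c + d) ω = LF γhat c ω + LF γhat d ω := by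
  simp [LF, add_mul, Finset.sum_add_distrib]

lemma LF_sub (c d : Fin K → ℝ) (ω : Ω) :
    LF γhat (c - d) ω = LF γhat c ω - LF γhat d ω := by
  simp [LF, sub_mul, Finset.sum_sub_distrib]

include hS hG

lemma coe_var (c : Fin K → ℝ) : ((Real.toNNReal (bbF S c c)) : ℝ) = bbF S c c :=
  Real.coe_toNNReal _ (bbF_nonneg hS c)

lemma LF_int (c : Fin K → ℝ) (n : ℕ) : Integrable (fun ω => LF γhat c ω ^ n) μ :=
  rv_int (hG c) n

lemma LF_mom1 (c : Fin K → ℝ) : ∫ ω, LF γhat c ω ∂μ = mmF γ c := rv_mom1 (hG c)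

lemma LF_mom2 (c : Fin K → ℝ) :
    ∫ ω, LF γhat c ω ^ 2 ∂μ = mmF γ c ^ 2 + bbF S c c := by
  have h := rv_mom2 (hG c)
  rw [coe_var hS hG] at h
  exact h

lemma LF_mom3 (c : Fin K → ℝ) :
    ∫ ω, LF γhat c ω ^ 3 ∂μ = mmF γ c ^ 3 + 3 * mmF γ c * bbF S c c := by
  have h := rv_mom3 (hG c)
  rw [coe_var hS hG] at h
  exact h

lemma LF_mom4 (c : Fin K → ℝ) :
    ∫ ω, LF γhat c ω ^ 4 ∂μ
      = mmF γ c ^ 4 + 6 * mmF γ c ^ 2 * bbF S c c + 3 * bbF S c c ^ 2 := by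
  have h := rv_mom4 (hG c)
  rw [coe_var hS hG] at h
  exact h

lemma LF_int2 (c d : Fin K → ℝ) : Integrable (fun ω => LF γhat c ω * LF γhat d ω) μ := by
  have h : (fun ω => LF γhat c ω * LF γhat d ω)
      = fun ω => (LF γhat (c + d) ω ^ 2 - LF γhat (c - d) ω ^ 2) / 4 := by
    ext ω; rw [LF_add, LF_sub]; ring
  rw [h]
  exact ((LF_int hS hG (c+d) 2).sub (LF_int hS hG (c-d) 2)).div_const _

lemma LF_mom2' (c d : Fin K → ℝ) :
    ∫ ω, LF γhat c ω * LF γhat d ω ∂μ = mmF γ c * mmF γ d + bbF S c d := by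
  have h : (fun ω => LF γhat c ω * LF γhat d ω)
      = fun ω => (LF γhat (c + d) ω ^ 2 - LF γhat (c - d) ω ^ 2) / 4 := by
    ext ω; rw [LF_add, LF_sub]; ring
  rw [h, integral_div, integral_sub (LF_int hS hG (c+d) 2) (LF_int hS hG (c-d) 2),
    LF_mom2 hS hG, LF_mom2 hS hG, mmF_add, mmF_sub,
    bbF_add_left, bbF_add_right, bbF_add_right, bbF_sub_left, bbF_sub_right, bbF_sub_right,
    bbF_symm hS d c]
  ring

lemma LF_int3 (c d e : Fin K → ℝ) :
    Integrable (fun ω => LF γhat c ω * LF γhat d ω * LF γhat e ω) μ := by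
  have h : (fun ω => LF γhat c ω * LF γhat d ω * LF γhat e ω)
      = fun ω => (LF γhat (c + d + e) ω ^ 3 - LF γhat (c + d - e) ω ^ 3
          - LF γhat (c - d + e) ω ^ 3 + LF γhat (c - d - e) ω ^ 3) / 24 := by
    ext ω
    have h1 := LF_add (γhat := γhat) (c + d) e ω
    have h2 := LF_sub (γhat := γhat) (c + d) e ω
    have h3 := LF_add (γhat := γhat) (c - d) e ω
    have h4 := LF_sub (γhat := γhat) (c - d) e ω
    have h5 := LF_add (γhat := γhat) c d ω
    have h6 := LF_sub (γhat := γhat) c d ω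
    rw [h1, h2, h3, h4, h5, h6]
    ring
  rw [h]
  exact ((((LF_int hS hG (c+d+e) 3).sub (LF_int hS hG (c+d-e) 3)).sub
    (LF_int hS hG (c-d+e) 3)).add (LF_int hS hG (c-d-e) 3)).div_const _

lemma LF_mom3' (c d e : Fin K → ℝ) :
    ∫ ω, LF γhat c ω * LF γhat d ω * LF γhat e ω ∂μ
      = mmF γ c * mmF γ d * mmF γ e + mmF γ c * bbF S d e + mmF γ d * bbF S c e
        + mmF γ e * bbF S c d := by
  have h : (fun ω => LF γhat c ω * LF γhat d ω * LF γhat e ω)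
      = fun ω => (LF γhat (c + d + e) ω ^ 3 - LF γhat (c + d - e) ω ^ 3
          - LF γhat (c - d + e) ω ^ 3 + LF γhat (c - d - e) ω ^ 3) / 24 := by
    ext ω
    have h1 := LF_add (γhat := γhat) (c + d) e ω
    have h2 := LF_sub (γhat := γhat) (c + d) e ω
    have h3 := LF_add (γhat := γhat) (c - d) e ω
    have h4 := LF_sub (γhat := γhat) (c - d) e ω
    have h5 := LF_add (γhat := γhat) c d ω
    have h6 := LF_sub (γhat := γhat) c d ω
    rw [h1, h2, h3, h4, h5, h6]
    ring
  have I1 := LF_int hS hG (c+d+e) 3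
  have I2 := LF_int hS hG (c+d-e) 3
  have I3 := LF_int hS hG (c-d+e) 3
  have I4 := LF_int hS hG (c-d-e) 3
  have I12 : Integrable (fun ω => LF γhat (c+d+e) ω ^ 3 - LF γhat (c+d-e) ω ^ 3) μ := I1.sub I2
  have I123 : Integrable (fun ω => LF γhat (c+d+e) ω ^ 3 - LF γhat (c+d-e) ω ^ 3
      - LF γhat (c-d+e) ω ^ 3) μ := I12.sub I3
  rw [h, integral_div, integral_add I123 I4, integral_sub I12 I3, integral_sub I1 I2,
    LF_mom3 hS hG, LF_mom3 hS hG, LF_mom3 hS hG, LF_mom3 hS hG]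
  simp only [mmF_add, mmF_sub, bbF_add_left, bbF_sub_left, bbF_add_right, bbF_sub_right]
  rw [bbF_symm hS d c, bbF_symm hS e c, bbF_symm hS e d]
  ring

end LLayer
set_option linter.unusedSectionVars false

section L4Layer

variable {Ω : Type*} [MeasurableSpace Ω] {μ : Measure Ω}
variable {K : ℕ} {γhat : Ω → Fin K → ℝ} {γ : Fin K → ℝ} {S : Matrix (Fin K) (Fin K) ℝ}
variable (hS : S.PosSemidef)
variable (hG : ∀ c : Fin K → ℝ,
    Measure.map (fun ω => ∑ k, c k * γhat ω k) μ =
      gaussianReal (mmF γ c) (Real.toNNReal (bbF S c c)))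

include hS hG

lemma LF_quad_eq (c d e f : Fin K → ℝ) :
    (fun ω => LF γhat c ω * LF γhat d ω * LF γhat e ω * LF γhat f ω)
      = fun ω => (LF γhat (c+d+e+f) ω ^ 4 - LF γhat (c+d+e-f) ω ^ 4
          - LF γhat (c+d-e+f) ω ^ 4 + LF γhat (c+d-e-f) ω ^ 4
          - LF γhat (c-d+e+f) ω ^ 4 + LF γhat (c-d+e-f) ω ^ 4
          + LF γhat (c-d-e+f) ω ^ 4 - LF γhat (c-d-e-f) ω ^ 4) / 192 := by
  ext ω
  simp only [LF_add, LF_sub]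
  ring

lemma LF_int4 (c d e f : Fin K → ℝ) :
    Integrable (fun ω => LF γhat c ω * LF γhat d ω * LF γhat e ω * LF γhat f ω) μ := by
  rw [LF_quad_eq hS hG]
  exact (((((((LF_int hS hG (c+d+e+f) 4).sub (LF_int hS hG (c+d+e-f) 4)).sub
    (LF_int hS hG (c+d-e+f) 4)).add (LF_int hS hG (c+d-e-f) 4)).sub
    (LF_int hS hG (c-d+e+f) 4)).add (LF_int hS hG (c-d+e-f) 4)).add
    (LF_int hS hG (c-d-e+f) 4)).sub (LF_int hS hG (c-d-e-f) 4) |>.div_const _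

lemma LF_mom4' (c d e f : Fin K → ℝ) :
    ∫ ω, LF γhat c ω * LF γhat d ω * LF γhat e ω * LF γhat f ω ∂μ
      = mmF γ c * mmF γ d * mmF γ e * mmF γ f
        + bbF S c d * mmF γ e * mmF γ f + bbF S c e * mmF γ d * mmF γ f
        + bbF S c f * mmF γ d * mmF γ e + bbF S d e * mmF γ c * mmF γ f
        + bbF S d f * mmF γ c * mmF γ e + bbF S e f * mmF γ c * mmF γ d
        + bbF S c d * bbF S e f + bbF S c e * bbF S d f + bbF S c f * bbF S d e := by
  have I1 := LF_int hS hG (c+d+e+f) 4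
  have I2 := LF_int hS hG (c+d+e-f) 4
  have I3 := LF_int hS hG (c+d-e+f) 4
  have I4 := LF_int hS hG (c+d-e-f) 4
  have I5 := LF_int hS hG (c-d+e+f) 4
  have I6 := LF_int hS hG (c-d+e-f) 4
  have I7 := LF_int hS hG (c-d-e+f) 4
  have I8 := LF_int hS hG (c-d-e-f) 4
  have J2 : Integrable (fun ω => LF γhat (c+d+e+f) ω ^ 4 - LF γhat (c+d+e-f) ω ^ 4) μ :=
    I1.sub I2
  have J3 : Integrable (fun ω => LF γhat (c+d+e+f) ω ^ 4 - LF γhat (c+d+e-f) ω ^ 4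
      - LF γhat (c+d-e+f) ω ^ 4) μ := J2.sub I3
  have J4 : Integrable (fun ω => LF γhat (c+d+e+f) ω ^ 4 - LF γhat (c+d+e-f) ω ^ 4
      - LF γhat (c+d-e+f) ω ^ 4 + LF γhat (c+d-e-f) ω ^ 4) μ := J3.add I4
  have J5 : Integrable (fun ω => LF γhat (c+d+e+f) ω ^ 4 - LF γhat (c+d+e-f) ω ^ 4
      - LF γhat (c+d-e+f) ω ^ 4 + LF γhat (c+d-e-f) ω ^ 4
      - LF γhat (c-d+e+f) ω ^ 4) μ := J4.sub I5
  have J6 : Integrable (fun ω => LF γhat (c+d+e+f) ω ^ 4 - LF γhat (c+d+e-f) ω ^ 4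
      - LF γhat (c+d-e+f) ω ^ 4 + LF γhat (c+d-e-f) ω ^ 4
      - LF γhat (c-d+e+f) ω ^ 4 + LF γhat (c-d+e-f) ω ^ 4) μ := J5.add I6
  have J7 : Integrable (fun ω => LF γhat (c+d+e+f) ω ^ 4 - LF γhat (c+d+e-f) ω ^ 4
      - LF γhat (c+d-e+f) ω ^ 4 + LF γhat (c+d-e-f) ω ^ 4
      - LF γhat (c-d+e+f) ω ^ 4 + LF γhat (c-d+e-f) ω ^ 4
      + LF γhat (c-d-e+f) ω ^ 4) μ := J6.add I7
  rw [LF_quad_eq hS hG, integral_div, integral_sub J7 I8, integral_add J6 I7,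
    integral_add J5 I6, integral_sub J4 I5, integral_add J3 I4, integral_sub J2 I3,
    integral_sub I1 I2, LF_mom4 hS hG, LF_mom4 hS hG, LF_mom4 hS hG, LF_mom4 hS hG,
    LF_mom4 hS hG, LF_mom4 hS hG, LF_mom4 hS hG, LF_mom4 hS hG]
  simp only [mmF_add, mmF_sub, bbF_add_left, bbF_sub_left, bbF_add_right, bbF_sub_right]
  rw [bbF_symm hS d c, bbF_symm hS e c, bbF_symm hS e d, bbF_symm hS f c, bbF_symm hS f d,
    bbF_symm hS f e]
  ring

end L4Layer
section FinalAux

variable {K : ℕ}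

lemma LF_single {Ω : Type*} (γhat : Ω → Fin K → ℝ) (s : Fin K) (ω : Ω) :
    LF γhat (Pi.single s 1) ω = γhat ω s := by
  rw [LF, Finset.sum_eq_single s]
  · simp
  · intro k _ hk; simp [Pi.single_eq_of_ne hk]
  · simp

lemma bbF_single_single (S : Matrix (Fin K) (Fin K) ℝ) (s t : Fin K) :
    bbF S (Pi.single s 1) (Pi.single t 1) = S s t := by
  rw [bbF_single_left, Finset.sum_eq_single t]
  · simp
  · intro k _ hk; simp [Pi.single_eq_of_ne hk]
  · simp

lemma measurable_linfun (c : Fin K → ℝ) :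
    Measurable (fun x : Fin K → ℝ => ∑ k, c k * x k) := by
  exact Finset.measurable_sum _ (fun k _ => (measurable_pi_apply k).const_mul _)

end FinalAux

end Stmt8Aux

open Stmt8Aux

/-- For γ̂ ~ N(γ, Σ_X) and an independent Γ̂ ~ N(γᵀβ₀, σ_Y²), with
M = γγᵀ σ_Y⁻² and V = Σ_X σ_Y⁻², the covariance matrix of σ_Y⁻²(γ̂ Γ̂ − γ̂ γ̂ᵀ β₀)
equals (1 + β₀ᵀ V β₀)(M + V) + V β₀ β₀ᵀ V, stated entrywise. -/
theorem stmt8 {Ω : Type*} [MeasurableSpace Ω] (μ : Measure Ω) [IsProbabilityMeasure μ]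
    {K : ℕ} (γhat : Ω → Fin K → ℝ) (Γhat : Ω → ℝ)
    (γ β₀ : Fin K → ℝ) (SigmaX : Matrix (Fin K) (Fin K) ℝ) (σY : ℝ) (hσY : 0 < σY)
    (hS : SigmaX.PosSemidef)
    (hGauss : ∀ c : Fin K → ℝ,
      Measure.map (fun ω => ∑ k, c k * γhat ω k) μ =
        ProbabilityTheory.gaussianReal (∑ k, c k * γ k)
          (Real.toNNReal (∑ k, ∑ l, c k * SigmaX k l * c l)))
    (hΓ : Measure.map Γhat μ =
      ProbabilityTheory.gaussianReal (∑ k, γ k * β₀ k) (Real.toNNReal (σY ^ 2)))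
    (hindep : ProbabilityTheory.IndepFun γhat Γhat μ) :
    ∀ s t : Fin K,
      (∫ ω, ((γhat ω s * Γhat ω - ∑ l, γhat ω s * γhat ω l * β₀ l) / σY ^ 2) *
            ((γhat ω t * Γhat ω - ∑ l, γhat ω t * γhat ω l * β₀ l) / σY ^ 2) ∂μ) -
        (∫ ω, (γhat ω s * Γhat ω - ∑ l, γhat ω s * γhat ω l * β₀ l) / σY ^ 2 ∂μ) *
          (∫ ω, (γhat ω t * Γhat ω - ∑ l, γhat ω t * γhat ω l * β₀ l) / σY ^ 2 ∂μ)
      = (1 + (∑ k, ∑ l, β₀ k * SigmaX k l * β₀ l) / σY ^ 2) *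
          (γ s * γ t / σY ^ 2 + SigmaX s t / σY ^ 2) +
        ((∑ k, SigmaX s k * β₀ k) / σY ^ 2) * ((∑ l, SigmaX t l * β₀ l) / σY ^ 2) := by
  intro s t
  have hG : ∀ c : Fin K → ℝ,
      Measure.map (fun ω => ∑ k, c k * γhat ω k) μ =
        ProbabilityTheory.gaussianReal (mmF γ c) (Real.toNNReal (bbF SigmaX c c)) := hGauss
  set es : Fin K → ℝ := Pi.single s 1 with hes
  set et : Fin K → ℝ := Pi.single t 1 with het
  -- Γhat moments
  have hσ2 : (σY:ℝ) ^ 2 ≠ 0 := by positivity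
  have EΓ1 : ∫ ω, Γhat ω ∂μ = ∑ k, γ k * β₀ k := rv_mom1 hΓ
  have EΓ2 : ∫ ω, Γhat ω ^ 2 ∂μ = (∑ k, γ k * β₀ k) ^ 2 + σY ^ 2 := by
    have h := rv_mom2 hΓ
    rwa [Real.coe_toNNReal _ (by positivity)] at h
  have IntΓ1 : Integrable Γhat μ := by simpa using rv_int hΓ 1
  have IntΓ2 : Integrable (fun ω => Γhat ω ^ 2) μ := rv_int hΓ 2
  -- L integrability
  have intL : ∀ c, Integrable (fun ω => LF γhat c ω) μ := fun c => by
    simpa using LF_int hS hG c 1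
  -- independence
  have ind1 : ProbabilityTheory.IndepFun (fun ω => LF γhat es ω) Γhat μ :=
    hindep.comp (measurable_linfun es) measurable_id
  have ind2 : ProbabilityTheory.IndepFun (fun ω => LF γhat es ω * LF γhat et ω)
      (fun ω => Γhat ω ^ 2) μ :=
    hindep.comp ((measurable_linfun es).mul (measurable_linfun et)) (measurable_id.pow_const 2)
  have ind2' : ProbabilityTheory.IndepFun (fun ω => LF γhat et ω) Γhat μ :=
    hindep.comp (measurable_linfun et) measurable_id
  have ind3 : ProbabilityTheory.IndepFun
      (fun ω => LF γhat es ω * LF γhat et ω * LF γhat β₀ ω) Γhat μ :=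
    hindep.comp (((measurable_linfun es).mul (measurable_linfun et)).mul
      (measurable_linfun β₀)) measurable_id
  -- integrable products
  have iAΓ : Integrable (fun ω => LF γhat es ω * Γhat ω) μ :=
    ind1.integrable_mul (intL es) IntΓ1
  have iBΓ : Integrable (fun ω => LF γhat et ω * Γhat ω) μ :=
    ind2'.integrable_mul (intL et) IntΓ1
  have iAP : Integrable (fun ω => LF γhat es ω * LF γhat β₀ ω) μ := LF_int2 hS hG es β₀
  have iBP : Integrable (fun ω => LF γhat et ω * LF γhat β₀ ω) μ := LF_int2 hS hG et β₀
  have iABΓ2 : Integrable (fun ω => LF γhat es ω * LF γhat et ω * Γhat ω ^ 2) μ :=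
    ind2.integrable_mul (LF_int2 hS hG es et) IntΓ2
  have iABPΓ : Integrable (fun ω => LF γhat es ω * LF γhat et ω * LF γhat β₀ ω * Γhat ω) μ :=
    ind3.integrable_mul (LF_int3 hS hG es et β₀) IntΓ1
  have iABPP : Integrable
      (fun ω => LF γhat es ω * LF γhat et ω * LF γhat β₀ ω * LF γhat β₀ ω) μ :=
    LF_int4 hS hG es et β₀ β₀
  -- values of independent products
  have vAΓ : ∫ ω, LF γhat es ω * Γhat ω ∂μ
      = (∫ ω, LF γhat es ω ∂μ) * ∫ ω, Γhat ω ∂μ :=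
    ind1.integral_fun_mul_eq_mul_integral (intL es).aestronglyMeasurable IntΓ1.aestronglyMeasurable
  have vBΓ : ∫ ω, LF γhat et ω * Γhat ω ∂μ
      = (∫ ω, LF γhat et ω ∂μ) * ∫ ω, Γhat ω ∂μ :=
    ind2'.integral_fun_mul_eq_mul_integral (intL et).aestronglyMeasurable IntΓ1.aestronglyMeasurable
  have vABΓ2 : ∫ ω, LF γhat es ω * LF γhat et ω * Γhat ω ^ 2 ∂μ
      = (∫ ω, LF γhat es ω * LF γhat et ω ∂μ) * ∫ ω, Γhat ω ^ 2 ∂μ :=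
    ind2.integral_fun_mul_eq_mul_integral (LF_int2 hS hG es et).aestronglyMeasurable IntΓ2.aestronglyMeasurable
  have vABPΓ : ∫ ω, LF γhat es ω * LF γhat et ω * LF γhat β₀ ω * Γhat ω ∂μ
      = (∫ ω, LF γhat es ω * LF γhat et ω * LF γhat β₀ ω ∂μ) * ∫ ω, Γhat ω ∂μ :=
    ind3.integral_fun_mul_eq_mul_integral (LF_int3 hS hG es et β₀).aestronglyMeasurable IntΓ1.aestronglyMeasurable
  -- rewrite the goal integrands in LF form
  have hfs : (fun ω => (γhat ω s * Γhat ω - ∑ l, γhat ω s * γhat ω l * β₀ l) / σY ^ 2)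
      = fun ω => (LF γhat es ω * Γhat ω - LF γhat es ω * LF γhat β₀ ω) / σY ^ 2 := by
    funext ω
    rw [LF_single, LF, Finset.mul_sum]
    congr 2
    exact Finset.sum_congr rfl fun l _ => by ring
  have hft : (fun ω => (γhat ω t * Γhat ω - ∑ l, γhat ω t * γhat ω l * β₀ l) / σY ^ 2)
      = fun ω => (LF γhat et ω * Γhat ω - LF γhat et ω * LF γhat β₀ ω) / σY ^ 2 := by
    funext ω
    rw [LF_single, LF, Finset.mul_sum]
    congr 2
    exact Finset.sum_congr rfl fun l _ => by ring
  have hfst : (fun ω => ((γhat ω s * Γhat ω - ∑ l, γhat ω s * γhat ω l * β₀ l) / σY ^ 2) *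
        ((γhat ω t * Γhat ω - ∑ l, γhat ω t * γhat ω l * β₀ l) / σY ^ 2))
      = fun ω => (LF γhat es ω * LF γhat et ω * Γhat ω ^ 2
          - 2 * (LF γhat es ω * LF γhat et ω * LF γhat β₀ ω * Γhat ω)
          + LF γhat es ω * LF γhat et ω * LF γhat β₀ ω * LF γhat β₀ ω) / (σY ^ 2 * σY ^ 2) := by
    funext ω
    rw [show γhat ω s = LF γhat es ω from (LF_single γhat s ω).symm,
        show γhat ω t = LF γhat et ω from (LF_single γhat t ω).symm,
        show (∑ l, LF γhat es ω * γhat ω l * β₀ l) = LF γhat es ω * LF γhat β₀ ω from by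
          rw [LF, LF, Finset.mul_sum]; exact Finset.sum_congr rfl fun l _ => by ring,
        show (∑ l, LF γhat et ω * γhat ω l * β₀ l) = LF γhat et ω * LF γhat β₀ ω from by
          rw [LF, LF, Finset.mul_sum]; exact Finset.sum_congr rfl fun l _ => by ring]
    ring
  rw [hfs, hft, hfst]
  -- split the integrals
  have iW1 : Integrable (fun ω => LF γhat es ω * LF γhat et ω * Γhat ω ^ 2
      - 2 * (LF γhat es ω * LF γhat et ω * LF γhat β₀ ω * Γhat ω)) μ :=
    iABΓ2.sub (iABPΓ.const_mul 2)
  have split1 : ∫ ω, (LF γhat es ω * LF γhat et ω * Γhat ω ^ 2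
        - 2 * (LF γhat es ω * LF γhat et ω * LF γhat β₀ ω * Γhat ω)
        + LF γhat es ω * LF γhat et ω * LF γhat β₀ ω * LF γhat β₀ ω) / (σY ^ 2 * σY ^ 2) ∂μ
      = ((∫ ω, LF γhat es ω * LF γhat et ω * Γhat ω ^ 2 ∂μ)
          - 2 * (∫ ω, LF γhat es ω * LF γhat et ω * LF γhat β₀ ω * Γhat ω ∂μ)
          + ∫ ω, LF γhat es ω * LF γhat et ω * LF γhat β₀ ω * LF γhat β₀ ω ∂μ)
          / (σY ^ 2 * σY ^ 2) := by
    rw [integral_div, integral_add iW1 iABPP, integral_sub iABΓ2 (iABPΓ.const_mul 2),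
      integral_const_mul]
  have split2 : ∫ ω, (LF γhat es ω * Γhat ω - LF γhat es ω * LF γhat β₀ ω) / σY ^ 2 ∂μ
      = ((∫ ω, LF γhat es ω * Γhat ω ∂μ) - ∫ ω, LF γhat es ω * LF γhat β₀ ω ∂μ) / σY ^ 2 := by
    rw [integral_div, integral_sub iAΓ iAP]
  have split3 : ∫ ω, (LF γhat et ω * Γhat ω - LF γhat et ω * LF γhat β₀ ω) / σY ^ 2 ∂μ
      = ((∫ ω, LF γhat et ω * Γhat ω ∂μ) - ∫ ω, LF γhat et ω * LF γhat β₀ ω ∂μ) / σY ^ 2 := by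
    rw [integral_div, integral_sub iBΓ iBP]
  rw [split1, split2, split3, vABΓ2, vABPΓ, vAΓ, vBΓ, EΓ1, EΓ2,
    LF_mom1 hS hG, LF_mom1 hS hG, LF_mom2' hS hG, LF_mom2' hS hG, LF_mom2' hS hG,
    LF_mom3' hS hG, LF_mom4' hS hG]
  -- now pure algebra
  have hp : (∑ k, γ k * β₀ k) = mmF γ β₀ :=
    Finset.sum_congr rfl fun k _ => mul_comm _ _
  have ha : mmF γ es = γ s := mmF_single γ s
  have hb : mmF γ et = γ t := mmF_single γ t
  have hq : (∑ k, ∑ l, β₀ k * SigmaX k l * β₀ l) = bbF SigmaX β₀ β₀ := rfl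
  have hu : (∑ k, SigmaX s k * β₀ k) = bbF SigmaX es β₀ := (bbF_single_left _ _ _).symm
  have hw : (∑ l, SigmaX t l * β₀ l) = bbF SigmaX et β₀ := (bbF_single_left _ _ _).symm
  have hst : bbF SigmaX es et = SigmaX s t := bbF_single_single _ _ _
  have hts : bbF SigmaX et es = SigmaX t s  := bbF_single_single _ _ _
  rw [hp, ha, hb, hq, hu, hw, hst]
  field_simp
  ring
end

section
/- Let A be a symmetric positive definite K×K matrix with eigenvalues λ₁ ≥ … ≥ λ_K. For each k, define b_k = 1/[A⁻¹]_{kk}, where [A⁻¹]_{kk} is the k-th diagonal entry of A⁻¹. Then min_k b_k ≥ λ_K, and there exists a constant C ∈ (0,1] depending only on K (one may take C = 1/K) such that min_k b_k ≤ λ_K / C. -/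
/-!
Diagonalise `A = U diag(λ) Uᵀ` with `U` orthogonal. Then `[A⁻¹]ₖₖ = ∑ᵢ Uₖᵢ² / λᵢ` is a convex
combination of the `1 / λᵢ`, hence at most `1 / λ_min`. Conversely, the column of `U` belonging to
`λ_min` is a unit vector, so one of its coordinates satisfies `Uₖᵢ² ≥ 1 / K`, and for that `k` the
single term `Uₖᵢ² / λ_min` already gives `[A⁻¹]ₖₖ ≥ 1 / (K λ_min)`.
-/

open Finset

namespace Matrix

lemma unitaryGroup.sum_sq_apply_row {n : Type*} [Fintype n] [DecidableEq n]
    (U : unitaryGroup n ℝ) (k : n) : ∑ i, U k i ^ 2 = 1 := by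
  simpa [mul_apply, sq] using congrFun₂ (Unitary.coe_mul_star_self U) k k

lemma unitaryGroup.sum_sq_apply_col {n : Type*} [Fintype n] [DecidableEq n]
    (U : unitaryGroup n ℝ) (i : n) : ∑ k, U k i ^ 2 = 1 := by
  simpa [mul_apply, sq] using congrFun₂ (Unitary.coe_star_mul_self U) i i

namespace PosDef

variable {n : Type*} [Fintype n] [DecidableEq n] {A : Matrix n n ℝ} (hA : A.PosDef)

lemma inv_eq_conjStarAlgAut_diagonal :
    A⁻¹ = Unitary.conjStarAlgAut ℝ _ hA.1.eigenvectorUnitary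
      (diagonal fun i ↦ (hA.1.eigenvalues i)⁻¹) := by
  refine inv_eq_right_inv ?_
  conv_lhs => enter [1]; rw [hA.1.spectral_theorem]
  rw [← map_mul, diagonal_mul_diagonal]
  simp [fun i ↦ mul_inv_cancel₀ (hA.eigenvalues_pos i).ne']

lemma inv_apply_self (k : n) :
    A⁻¹ k k = ∑ i, hA.1.eigenvectorUnitary k i ^ 2 / hA.1.eigenvalues i := by
  rw [hA.inv_eq_conjStarAlgAut_diagonal, Unitary.conjStarAlgAut_apply]
  simp [mul_apply, diagonal_apply, sq, div_eq_mul_inv, mul_right_comm]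

lemma iInf_eigenvalues_le_one_div_inv_apply_self (k : n) :
    ⨅ i, hA.1.eigenvalues i ≤ 1 / A⁻¹ k k := by
  have : Nonempty n := ⟨k⟩
  set μ := ⨅ i, hA.1.eigenvalues i
  obtain ⟨i₀, hi₀⟩ := exists_eq_ciInf_of_finite (f := hA.1.eigenvalues)
  have hμ : 0 < μ := (hA.eigenvalues_pos i₀).trans_eq hi₀
  rw [le_one_div hμ hA.inv.diag_pos]
  calc A⁻¹ k k = ∑ i, hA.1.eigenvectorUnitary k i ^ 2 / hA.1.eigenvalues i := hA.inv_apply_self k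
    _ ≤ ∑ i, hA.1.eigenvectorUnitary k i ^ 2 / μ := by
      gcongr with i
      exact ciInf_le (Finite.bddBelow_range _) i
    _ = 1 / μ := by rw [← sum_div, unitaryGroup.sum_sq_apply_row]

lemma exists_one_div_inv_apply_self_le [Nonempty n] :
    ∃ k, 1 / A⁻¹ k k ≤ (⨅ i, hA.1.eigenvalues i) * Fintype.card n := by
  set U := hA.1.eigenvectorUnitary
  obtain ⟨i₀, hi₀⟩ := exists_eq_ciInf_of_finite (f := hA.1.eigenvalues)
  have hμ : 0 < hA.1.eigenvalues i₀ := hA.eigenvalues_pos i₀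
  obtain ⟨k, -, hk⟩ : ∃ k ∈ univ, 1 / (Fintype.card n : ℝ) ≤ U k i₀ ^ 2 := by
    refine exists_le_of_sum_le univ_nonempty ?_
    simp [unitaryGroup.sum_sq_apply_col]
  refine ⟨k, ?_⟩
  rw [← hi₀, one_div_le hA.inv.diag_pos (by positivity)]
  calc 1 / (hA.1.eigenvalues i₀ * Fintype.card n)
      ≤ U k i₀ ^ 2 / hA.1.eigenvalues i₀ := by
        rw [mul_comm, ← div_div]; gcongr
    _ ≤ ∑ i, U k i ^ 2 / hA.1.eigenvalues i :=
        single_le_sum (fun i _ ↦ div_nonneg (sq_nonneg _) (hA.eigenvalues_pos i).le) (mem_univ i₀)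
    _ = A⁻¹ k k := (hA.inv_apply_self k).symm

end PosDef
end Matrix

/-- For a symmetric positive definite K×K matrix A with smallest eigenvalue
λ_K, setting b_k = 1/[A⁻¹]_{kk}, we have min_k b_k ≥ λ_K and min_k b_k ≤ λ_K·K
(i.e. min_k b_k ≤ λ_K / C with C = 1/K). -/
theorem stmt9 {K : ℕ} [NeZero K] (A : Matrix (Fin K) (Fin K) ℝ) (hA : A.PosDef) :
    (⨅ i, hA.1.eigenvalues i) ≤ (⨅ k, 1 / (A⁻¹ k k)) ∧
    (⨅ k, 1 / (A⁻¹ k k)) ≤ (⨅ i, hA.1.eigenvalues i) * K := by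
  obtain ⟨k, hk⟩ := hA.exists_one_div_inv_apply_self_le
  refine ⟨le_ciInf hA.iInf_eigenvalues_le_one_div_inv_apply_self,
    (ciInf_le (Finite.bddBelow_range _) k).trans ?_⟩
  simpa only [Fintype.card_fin] using hk
end

section
/- Let X ~ N(γ, σ²) and Y ~ N(Γ, s²) be independent real Gaussian random variables with Γ = γ·β for a fixed real β. Then Var(XY − X²β + σ²β) = (1 + β²σ²/s²)·s²·(γ²/s² + σ²/s²)·s² + σ⁴β² ; equivalently, setting m = γ²/s², v = σ²/s², Var((XY − X²β)/s²)·s⁴/s⁴ gives Var((XY − X²β)s^{-2}) = (1 + β²v)(m + v) + v²β². -/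
/-!
The moments of `N(m, v)` are the derivatives at `0` of its moment generating function
`t ↦ exp (m t + v t² / 2)`. Differentiating `p(t) · exp (m t + v t² / 2)` for a polynomial `p`
gives `(p' + (m + v t) p) · exp (m t + v t² / 2)`, so the `n`-th moment is the value at `0` of the
`n`-th polynomial of this recursion; this yields `E X³ = γ³ + 3γσ²` and
`E X⁴ = γ⁴ + 6γ²σ² + 3σ⁴`. For `W = XY − βX²`, independence factors `E W` and
`E W² = E X² E Y² − 2β E X³ E Y + β² E X⁴` into moments of `X` and `Y`, and
`Var W = E W² − (E W)²` becomes a polynomial identity.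
-/

open MeasureTheory ProbabilityTheory Real
open scoped NNReal

section GaussianMoments

open Polynomial

noncomputable def gaussianMomentPoly (a b : ℝ) : ℕ → ℝ[X]
  | 0 => 1
  | n + 1 => derivative (gaussianMomentPoly a b n) + (C a + C b * X) * gaussianMomentPoly a b n

lemma deriv_eval_mul_exp_quadratic (a b : ℝ) (p : ℝ[X]) :
    deriv (fun t ↦ p.eval t * rexp (a * t + b * t ^ 2 / 2))
      = fun t ↦ (derivative p + (C a + C b * X) * p).eval t * rexp (a * t + b * t ^ 2 / 2) := by
  funext t
  have hq : HasDerivAt (fun t ↦ a * t + b * t ^ 2 / 2) (a + b * t) t :=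
    (((hasDerivAt_id t).const_mul a).fun_add
      (((hasDerivAt_pow 2 t).const_mul b).div_const 2)).congr_deriv (by norm_num; ring)
  refine ((p.hasDerivAt t).mul hq.exp).deriv.trans ?_
  simp only [eval_add, eval_mul, eval_C, eval_X]
  ring

lemma iteratedDeriv_exp_quadratic (a b : ℝ) (n : ℕ) :
    iteratedDeriv n (fun t ↦ rexp (a * t + b * t ^ 2 / 2))
      = fun t ↦ (gaussianMomentPoly a b n).eval t * rexp (a * t + b * t ^ 2 / 2) := by
  induction n with
  | zero => simp [gaussianMomentPoly]
  | succ n ih => rw [iteratedDeriv_succ, ih, deriv_eval_mul_exp_quadratic]; rfl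

lemma integral_pow_gaussianReal (m : ℝ) (v : ℝ≥0) (n : ℕ) :
    ∫ x, x ^ n ∂gaussianReal m v = (gaussianMomentPoly m v n).eval 0 := by
  have h := iteratedDeriv_mgf_zero (X := fun x ↦ x) (μ := gaussianReal m v) (by simp) n
  rw [mgf_fun_id_gaussianReal, iteratedDeriv_exp_quadratic] at h
  simpa using h.symm

lemma integral_sq_gaussianReal (m : ℝ) (v : ℝ≥0) :
    ∫ x, x ^ 2 ∂gaussianReal m v = m ^ 2 + v := by
  simp only [integral_pow_gaussianReal, gaussianMomentPoly, derivative_add, derivative_mul,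
    derivative_C, derivative_X, derivative_one, map_zero, eval_add, eval_mul, eval_C, eval_X,
    eval_one, eval_zero]
  ring

lemma integral_pow_three_gaussianReal (m : ℝ) (v : ℝ≥0) :
    ∫ x, x ^ 3 ∂gaussianReal m v = m ^ 3 + 3 * m * v := by
  simp only [integral_pow_gaussianReal, gaussianMomentPoly, derivative_add, derivative_mul,
    derivative_C, derivative_X, derivative_one, map_zero, eval_add, eval_mul, eval_C, eval_X,
    eval_one, eval_zero]
  ring

lemma integral_pow_four_gaussianReal (m : ℝ) (v : ℝ≥0) :
    ∫ x, x ^ 4 ∂gaussianReal m v = m ^ 4 + 6 * m ^ 2 * v + 3 * v ^ 2 := by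
  simp only [integral_pow_gaussianReal, gaussianMomentPoly, derivative_add, derivative_mul,
    derivative_C, derivative_X, derivative_one, map_zero, eval_add, eval_mul, eval_C, eval_X,
    eval_one, eval_zero]
  ring

end GaussianMoments

section Moments

variable {Ω : Type*} [MeasurableSpace Ω] {μ : Measure Ω}

lemma MeasureTheory.MemLp.integrable_pow_of_le [IsFiniteMeasure μ] {X : Ω → ℝ} {p n : ℕ}
    (hX : MemLp X p μ) (hn : n ≤ p) : Integrable (fun ω ↦ X ω ^ n) μ := by
  have := (hX.mono_exponent (by exact_mod_cast hn)).integrable_norm_pow'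
  exact this.congr' (hX.1.pow n) (ae_of_all _ fun ω ↦ by simp [norm_pow])

lemma integral_pow_of_map_eq {X : Ω → ℝ} {ν : Measure ℝ} (hX : AEMeasurable X μ)
    (h : μ.map X = ν) (n : ℕ) : ∫ ω, X ω ^ n ∂μ = ∫ x, x ^ n ∂ν := by
  rw [← h, integral_map hX (by fun_prop)]

lemma memLp_of_map_eq_gaussianReal {X : Ω → ℝ} {m : ℝ} {v : ℝ≥0} (hX : AEMeasurable X μ)
    (h : μ.map X = gaussianReal m v) (p : ℝ≥0) : MemLp X p μ := by
  have := memLp_id_gaussianReal (μ := m) (v := v) p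
  rw [← h] at this
  exact (memLp_map_measure_iff aestronglyMeasurable_id hX).1 this

lemma ProbabilityTheory.IndepFun.variance_mul_sub_sq_mul [IsProbabilityMeasure μ] {X Y : Ω → ℝ}
    (hXY : IndepFun X Y μ) (hX : MemLp X 4 μ) (hY : MemLp Y 2 μ) (β : ℝ) :
    Var[fun ω ↦ X ω * Y ω - X ω ^ 2 * β; μ]
      = (∫ ω, X ω ^ 2 ∂μ) * (∫ ω, Y ω ^ 2 ∂μ)
          - 2 * β * (∫ ω, X ω ^ 3 ∂μ) * (∫ ω, Y ω ∂μ) + β ^ 2 * ∫ ω, X ω ^ 4 ∂μ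
        - ((∫ ω, X ω ∂μ) * (∫ ω, Y ω ∂μ) - β * ∫ ω, X ω ^ 2 ∂μ) ^ 2 := by
  have iX : ∀ n ≤ 4, Integrable (fun ω ↦ X ω ^ n) μ := fun n hn ↦ hX.integrable_pow_of_le hn
  have iY : ∀ n ≤ 2, Integrable (fun ω ↦ Y ω ^ n) μ := fun n hn ↦ hY.integrable_pow_of_le hn
  have iX1 : Integrable X μ := by simpa using iX 1 (by norm_num)
  have iY1 : Integrable Y μ := by simpa using iY 1 (by norm_num)
  have h22 : IndepFun (fun ω ↦ X ω ^ 2) (fun ω ↦ Y ω ^ 2) μ :=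
    hXY.comp (measurable_id.pow_const 2) (measurable_id.pow_const 2)
  have h31 : IndepFun (fun ω ↦ X ω ^ 3) Y μ := hXY.comp (measurable_id.pow_const 3) measurable_id
  have iXY : Integrable (fun ω ↦ X ω * Y ω) μ := hXY.integrable_mul iX1 iY1
  have iX2Y2 : Integrable (fun ω ↦ X ω ^ 2 * Y ω ^ 2) μ :=
    h22.integrable_mul (iX 2 (by norm_num)) (iY 2 le_rfl)
  have iX3Y : Integrable (fun ω ↦ X ω ^ 3 * Y ω) μ := h31.integrable_mul (iX 3 (by norm_num)) iY1
  have iA : Integrable (fun ω ↦ X ω ^ 2 * Y ω ^ 2 - 2 * β * (X ω ^ 3 * Y ω)) μ :=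
    iX2Y2.sub (iX3Y.const_mul _)
  set W := fun ω ↦ X ω * Y ω - X ω ^ 2 * β
  have hW_sq : (fun ω ↦ W ω ^ 2)
      = fun ω ↦ X ω ^ 2 * Y ω ^ 2 - 2 * β * (X ω ^ 3 * Y ω) + β ^ 2 * X ω ^ 4 := by
    funext ω; ring
  have hW : MemLp W 2 μ := by
    have hWm : AEStronglyMeasurable W μ := (hX.1.mul hY.1).sub ((hX.1.pow 2).mul_const β)
    refine (memLp_two_iff_integrable_sq hWm).2 ?_
    rw [hW_sq]
    exact iA.fun_add ((iX 4 le_rfl).const_mul _)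
  have mean_W : ∫ ω, W ω ∂μ = (∫ ω, X ω ∂μ) * (∫ ω, Y ω ∂μ) - β * ∫ ω, X ω ^ 2 ∂μ := by
    rw [integral_sub iXY ((iX 2 (by norm_num)).mul_const β), integral_mul_const,
      hXY.integral_fun_mul_eq_mul_integral hX.1 hY.1]
    ring
  have mean_W_sq : ∫ ω, W ω ^ 2 ∂μ = (∫ ω, X ω ^ 2 ∂μ) * (∫ ω, Y ω ^ 2 ∂μ)
      - 2 * β * (∫ ω, X ω ^ 3 ∂μ) * (∫ ω, Y ω ∂μ) + β ^ 2 * ∫ ω, X ω ^ 4 ∂μ := by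
    rw [hW_sq, integral_add iA ((iX 4 le_rfl).const_mul _),
      integral_sub iX2Y2 (iX3Y.const_mul _), integral_const_mul, integral_const_mul,
      h22.integral_fun_mul_eq_mul_integral (hX.1.pow 2) (hY.1.pow 2),
      h31.integral_fun_mul_eq_mul_integral (hX.1.pow 3) hY.1]
    ring
  rw [variance_eq_sub hW]
  change ∫ ω, W ω ^ 2 ∂μ - (∫ ω, W ω ∂μ) ^ 2 = _
  rw [mean_W, mean_W_sq]

end Moments

/-- For independent X ~ N(γ, σ²) and Y ~ N(Γ, s²) with Γ = γβ, setting
m = γ²/s² and v = σ²/s², one has Var((XY − X²β)·s⁻²) = (1 + β²v)(m + v) + v²β². -/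
theorem stmt19 {Ω : Type*} [MeasurableSpace Ω] (μ : Measure Ω) [IsProbabilityMeasure μ]
    (X Y : Ω → ℝ) (hXm : Measurable X) (hYm : Measurable Y)
    (γ β σ s : ℝ) (hs : s ≠ 0)
    (hX : Measure.map X μ = ProbabilityTheory.gaussianReal γ (Real.toNNReal (σ ^ 2)))
    (hY : Measure.map Y μ = ProbabilityTheory.gaussianReal (γ * β) (Real.toNNReal (s ^ 2)))
    (hindep : ProbabilityTheory.IndepFun X Y μ) :
    ProbabilityTheory.variance (fun ω => (X ω * Y ω - (X ω) ^ 2 * β) / s ^ 2) μ =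
      (1 + β ^ 2 * (σ ^ 2 / s ^ 2)) * (γ ^ 2 / s ^ 2 + σ ^ 2 / s ^ 2)
        + (σ ^ 2 / s ^ 2) ^ 2 * β ^ 2 := by
  have momX := integral_pow_of_map_eq hXm.aemeasurable hX
  have momY := integral_pow_of_map_eq hYm.aemeasurable hY
  have meanX : ∫ ω, X ω ∂μ = γ := by simpa using momX 1
  have meanY : ∫ ω, Y ω ∂μ = γ * β := by simpa using momY 1
  have hscale : (fun ω ↦ (X ω * Y ω - X ω ^ 2 * β) / s ^ 2)
      = fun ω ↦ (s ^ 2)⁻¹ * (X ω * Y ω - X ω ^ 2 * β) := by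
    funext ω; ring
  rw [hscale, variance_const_mul,
    hindep.variance_mul_sub_sq_mul (memLp_of_map_eq_gaussianReal hXm.aemeasurable hX 4)
      (memLp_of_map_eq_gaussianReal hYm.aemeasurable hY 2),
    meanX, meanY, momX, momX, momX, momY, integral_sq_gaussianReal,
    integral_pow_three_gaussianReal, integral_pow_four_gaussianReal, integral_sq_gaussianReal,
    Real.coe_toNNReal _ (sq_nonneg σ), Real.coe_toNNReal _ (sq_nonneg s)]
  field_simp
  ring
end
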